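/- For every d ∈ ℕ there exists a constant C(d) > 0 such that for any N ∈ ℕ there exist m ∈ ℕ with m ≤ C(d)·N·(log N)^{d−1} (where log denotes logarithm and for N = 1 the bound reads m ≤ C(d)) and a vector h = (h_1,…,h_d) ∈ ℤ^d such that the Korobov cubature formula P_m(f,h) := m^{−1} Σ_{ν=1}^m f(2π{νh_1/m}, …, 2π{νh_d/m}) satisfies P_m(f,h) = (2π)^{−d} ∫_{𝕋^d} f(x) dx for all f ∈ 𝒯(Γ(N,d)). -/

import Mathlib

noncomputable section
open scoped BigOperators
open MeasureTheory

/-- The cube `[0, 2π]^d`, representing the torus `𝕋^d`. -/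
def cube (d : ℕ) : Set (Fin d → ℝ) := Set.Icc 0 (fun _ => 2 * Real.pi)

/-- Uniform norm over the torus `𝕋^d = [0, 2π]^d`. -/
def unifNorm {d : ℕ} (f : (Fin d → ℝ) → ℂ) : ℝ :=
  ⨆ x : cube d, ‖f ↑x‖

/-- The exponential `e^{i(k,x)}`. -/
def expFun {d : ℕ} (k : Fin d → ℤ) : (Fin d → ℝ) → ℂ :=
  fun x => Complex.exp (Complex.I * ∑ j, (k j : ℂ) * (x j : ℂ))

/-- `𝒯(Q)`: the space of trigonometric polynomials with frequencies in `Q`. -/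
def trigSpace {d : ℕ} (Q : Finset (Fin d → ℤ)) : Submodule ℂ ((Fin d → ℝ) → ℂ) :=
  Submodule.span ℂ (expFun '' (Q : Set (Fin d → ℤ)))

/-- `R(s) = {k : |k_j| < 2^{s_j}}`. -/
def Rbox {d : ℕ} (s : Fin d → ℕ) : Finset (Fin d → ℤ) :=
  Fintype.piFinset fun j => Finset.Ioo (-(2 ^ (s j) : ℤ)) ((2 : ℤ) ^ (s j))

/-- Best uniform approximation `d(f, 𝒯(Q))_∞`. -/
def distT {d : ℕ} (f : (Fin d → ℝ) → ℂ) (Q : Finset (Fin d → ℤ)) : ℝ :=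
  ⨅ u : trigSpace Q, unifNorm (f - (u : (Fin d → ℝ) → ℂ))

/-- `2π`-periodicity in each variable. -/
def Periodic2Pi {d : ℕ} (f : (Fin d → ℝ) → ℂ) : Prop :=
  ∀ (x : Fin d → ℝ) (j : Fin d), f (x + (2 * Real.pi) • (Pi.single j 1 : Fin d → ℝ)) = f x

/-- The Fibonacci numbers `b_0 = b_1 = 1`, `b_n = b_{n-1} + b_{n-2}`. -/
def fibb : ℕ → ℕ
  | 0 => 1
  | 1 => 1
  | n + 2 => fibb (n + 1) + fibb n

/-- The hyperbolic cross `Γ(N, d)`. -/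
def hyperCross (d N : ℕ) : Finset (Fin d → ℤ) :=
  (Fintype.piFinset fun _ : Fin d => Finset.Icc (-(N : ℤ)) (N : ℤ)).filter
    fun k => (∏ j, max |k j| 1) ≤ (N : ℤ)

/-- The Fibonacci points `y^ν = (2πν/b_n, 2π{ν b_{n-1}/b_n})`. -/
def fibPoint (n ν : ℕ) : Fin 2 → ℝ :=
  ![2 * Real.pi * ν / fibb n, 2 * Real.pi * Int.fract ((↑(ν * fibb (n - 1)) : ℝ) / fibb n)]

/-- The Korobov points `w^ν = (2π{νh_1/m}, …, 2π{νh_d/m})`. -/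
def korNode (m : ℕ) {d : ℕ} (h : Fin d → ℤ) (ν : ℕ) : Fin d → ℝ :=
  fun i => 2 * Real.pi * Int.fract ((ν : ℝ) * (h i : ℝ) / (m : ℝ))

/-!
On `e^{i(k,x)}` the normalised Korobov sum is a mean of `m`-th roots of unity, hence `1` if
`m ∣ (k,h)` and `0` otherwise, whereas the normalised integral is `1` if `k = 0` and `0` otherwise.
So the formula is exact on `𝒯(Γ(N,d))` once `m ∣ (k,h)` forces `k = 0` for `k ∈ Γ(N,d)`.

Take `m = p` prime with `|Γ(N,d)| < p ≤ 2|Γ(N,d)|` (Bertrand). As `|k_j| ≤ N < p`, a nonzero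
`k ∈ Γ(N,d)` stays nonzero mod `p`, so `{g ∈ 𝔽_p^d : (k,g) = 0}` is a proper subspace, and fewer
than `p` proper subspaces cannot cover `𝔽_p^d`; this produces `h`. Finally
`|Γ(N,d)| ≤ 4^d N (1 + log N)^{d-1}` by induction on `d`: fixing the last coordinate `t` leaves
`Γ(⌊N / max(|t|,1)⌋, d-1)`, and `Σ_{u ≤ N} N / max(u,1) ≤ N (1 + H_N)`.
-/

open Finset Real

theorem integral_Icc_exp_int_mul_I (k : ℤ) :
    ∫ t in Set.Icc (0 : ℝ) (2 * π), Complex.exp (Complex.I * k * t) =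
      if k = 0 then ((2 * π : ℝ) : ℂ) else 0 := by
  rw [integral_Icc_eq_integral_Ioc, ← intervalIntegral.integral_of_le (by positivity)]
  split_ifs with hk
  · simp [hk]
  · have hc : Complex.I * k ≠ 0 := mul_ne_zero Complex.I_ne_zero (mod_cast hk)
    have hperiod : Complex.exp (Complex.I * k * (2 * π)) = 1 := by
      rw [← Complex.exp_int_mul_two_pi_mul_I k]
      ring_nf
    simp [integral_exp_mul_complex hc, hperiod]

theorem expFun_eq_prod {d : ℕ} (k : Fin d → ℤ) (x : Fin d → ℝ) :
    expFun k x = ∏ j, Complex.exp (Complex.I * k j * x j) := by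
  simp only [expFun, mul_sum, Complex.exp_sum, mul_assoc]

theorem setIntegral_cube_prod {d : ℕ} (g : Fin d → ℝ → ℂ) :
    ∫ x in cube d, ∏ j, g j (x j) = ∏ j, ∫ t in Set.Icc (0 : ℝ) (2 * π), g j t := by
  rw [cube, ← Set.pi_univ_Icc, volume_pi, Measure.restrict_pi_pi]
  exact integral_fintype_prod_eq_prod g

theorem integral_cube_expFun {d : ℕ} (k : Fin d → ℤ) :
    ∫ x in cube d, expFun k x = if k = 0 then (((2 * π) ^ d : ℝ) : ℂ) else 0 := by
  simp_rw [expFun_eq_prod, setIntegral_cube_prod fun j t => Complex.exp (Complex.I * k j * t),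
    integral_Icc_exp_int_mul_I]
  split_ifs with hk
  · simp [hk]
  · obtain ⟨j, hj⟩ := Function.ne_iff.1 hk
    exact prod_eq_zero (mem_univ j) (if_neg hj)

theorem sum_Icc_pow_of_pow_eq_one {K : Type*} [Field K] [DecidableEq K] {w : K} {m : ℕ}
    (hw : w ^ m = 1) :
    ∑ ν ∈ Icc 1 m, w ^ ν = if w = 1 then (m : K) else 0 := by
  split_ifs with h1
  · simp [h1]
  · have hshift : ∑ ν ∈ Icc 1 m, w ^ ν = w * ∑ ν ∈ range m, w ^ ν := by
      rw [mul_sum, ← Ico_add_one_right_eq_Icc, sum_Ico_eq_sum_range]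
      simp [pow_succ', add_comm]
    rw [hshift, geom_sum_eq h1, hw, sub_self, zero_div, mul_zero]

theorem expFun_korNode {d : ℕ} (m : ℕ) (h k : Fin d → ℤ) (ν : ℕ) :
    expFun k (korNode m h ν) = (Complex.exp (2 * π * Complex.I / m) ^ (∑ j, k j * h j)) ^ ν := by
  rw [← Complex.exp_int_mul, ← Complex.exp_nat_mul, expFun, Complex.exp_eq_exp_iff_exists_int]
  refine ⟨-∑ j, k j * ⌊(ν : ℝ) * h j / m⌋, ?_⟩
  simp only [korNode, ← Int.self_sub_floor]
  push_cast
  simp only [mul_sum, sum_mul, ← sum_neg_distrib, ← sum_add_distrib]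
  exact sum_congr rfl fun j _ => by ring

theorem sum_expFun_korNode {d m : ℕ} (hm : m ≠ 0) (h k : Fin d → ℤ) :
    ∑ ν ∈ Icc 1 m, expFun k (korNode m h ν) =
      if (m : ℤ) ∣ ∑ j, k j * h j then (m : ℂ) else 0 := by
  have hζ := Complex.isPrimitiveRoot_exp m hm
  have hw : (Complex.exp (2 * π * Complex.I / m) ^ (∑ j, k j * h j)) ^ m = 1 := by
    rw [← zpow_natCast, ← zpow_mul, mul_comm (∑ j, k j * h j), zpow_mul, zpow_natCast,
      hζ.pow_eq_one, one_zpow]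
  simp_rw [expFun_korNode, sum_Icc_pow_of_pow_eq_one hw, hζ.zpow_eq_one_iff_dvd]

theorem korobov_exact_expFun {d m : ℕ} (hm : m ≠ 0) {h k : Fin d → ℤ}
    (hk : (m : ℤ) ∣ ∑ j, k j * h j ↔ k = 0) :
    (m : ℂ)⁻¹ * ∑ ν ∈ Icc 1 m, expFun k (korNode m h ν) =
      (((2 * π) ^ d : ℝ) : ℂ)⁻¹ * ∫ x in cube d, expFun k x := by
  rw [sum_expFun_korNode hm, integral_cube_expFun]
  simp only [hk]
  split_ifs
  · have : (((2 * π) ^ d : ℝ) : ℂ) ≠ 0 := by exact_mod_cast (by positivity : (2 * π) ^ d ≠ 0)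
    rw [inv_mul_cancel₀ (mod_cast hm), inv_mul_cancel₀ this]
  · simp

theorem continuous_expFun {d : ℕ} (k : Fin d → ℤ) : Continuous (expFun k) := by
  unfold expFun; fun_prop

theorem continuous_of_mem_trigSpace {d : ℕ} {Q : Finset (Fin d → ℤ)} {f : (Fin d → ℝ) → ℂ}
    (hf : f ∈ trigSpace Q) : Continuous f := by
  induction hf using Submodule.span_induction with
  | mem g hg => obtain ⟨k, -, rfl⟩ := hg; exact continuous_expFun k
  | zero => exact continuous_const
  | add f g _ _ hf hg => exact hf.add hg
  | smul c f _ hf => exact hf.const_smul c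

theorem korobov_exact_of_forall_expFun {d : ℕ} {Q : Finset (Fin d → ℤ)} {m : ℕ} {h : Fin d → ℤ}
    (hQ : ∀ k ∈ Q, (m : ℂ)⁻¹ * ∑ ν ∈ Icc 1 m, expFun k (korNode m h ν) =
      (((2 * π) ^ d : ℝ) : ℂ)⁻¹ * ∫ x in cube d, expFun k x)
    {f : (Fin d → ℝ) → ℂ} (hf : f ∈ trigSpace Q) :
    (m : ℂ)⁻¹ * ∑ ν ∈ Icc 1 m, f (korNode m h ν) =
      (((2 * π) ^ d : ℝ) : ℂ)⁻¹ * ∫ x in cube d, f x := by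
  have hint : ∀ g ∈ trigSpace Q, IntegrableOn g (cube d) := fun g hg =>
    (continuous_of_mem_trigSpace hg).continuousOn.integrableOn_compact isCompact_Icc
  induction hf using Submodule.span_induction with
  | mem g hg => obtain ⟨k, hk, rfl⟩ := hg; exact hQ k hk
  | zero => simp
  | add f g hfQ hgQ hf hg =>
    simp only [Pi.add_apply, sum_add_distrib, mul_add, hf, hg,
      integral_add (hint f hfQ) (hint g hgQ)]
  | smul c f _ hf =>
    simp only [Pi.smul_apply, smul_eq_mul, ← mul_sum, integral_const_mul, mul_left_comm _ c, hf]

theorem exists_forall_dotProduct_ne_zero {K ι : Type*} [Field K] [Fintype ι]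
    (S : Finset (ι → K)) (h0 : 0 ∉ S) (hS : (#S : ℕ∞) < ENat.card K) :
    ∃ g : ι → K, ∀ k ∈ S, k ⬝ᵥ g ≠ 0 := by
  classical
  let ker (k : S) := LinearMap.ker (dotProductBilin K K (k : ι → K))
  have hker (k : S) : ker k ≠ ⊤ := by
    obtain ⟨j, hj⟩ := Function.ne_iff.1 (ne_of_mem_of_not_mem k.2 h0)
    intro htop
    have : (k : ι → K) ⬝ᵥ Pi.single j 1 = 0 := LinearMap.mem_ker.1 (htop ▸ Submodule.mem_top)
    exact hj (by simpa [dotProduct_single] using this)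
  obtain ⟨g, -, hg⟩ := Set.exists_of_ssubset
    (Submodule.iUnion_ssubset_of_forall_ne_top_of_card_lt univ ker hker (by simpa using hS))
  simp only [Set.mem_iUnion, not_exists] at hg
  exact ⟨g, fun k hk hkg => hg ⟨k, hk⟩ (mem_univ _) (LinearMap.mem_ker.2 hkg)⟩

theorem exists_forall_dvd_sum_mul_iff_eq_zero {ι : Type*} [Fintype ι] {p : ℕ} (hp : p.Prime)
    {Q : Finset (ι → ℤ)} (hQ : ∀ k ∈ Q, ∀ j, |k j| < p) (hcard : #Q < p) :
    ∃ h : ι → ℤ, ∀ k ∈ Q, ((p : ℤ) ∣ ∑ j, k j * h j ↔ k = 0) := by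
  have := Fact.mk hp
  classical
  let reduce (k : ι → ℤ) : ι → ZMod p := fun j => k j
  have hreduce : ∀ k ∈ Q, reduce k = 0 → k = 0 := fun k hk hk0 => funext fun j =>
    Int.eq_zero_of_abs_lt_dvd ((ZMod.intCast_zmod_eq_zero_iff_dvd _ _).1 (congrFun hk0 j))
      (hQ k hk j)
  obtain ⟨g, hg⟩ := exists_forall_dotProduct_ne_zero ((Q.erase 0).image reduce)
    (by
      simp only [mem_image, mem_erase, not_exists, not_and]
      exact fun k ⟨hk0, hk⟩ hred => hk0 (hreduce k hk hred))
    (by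
      rw [ENat.card_eq_coe_fintype_card, ZMod.card, Nat.cast_lt]
      exact (card_image_le.trans card_erase_le).trans_lt hcard)
  refine ⟨fun j => (g j).val, fun k hk => ?_⟩
  have hsum : (((∑ j, k j * (g j).val : ℤ)) : ZMod p) = reduce k ⬝ᵥ g := by
    simp [reduce, dotProduct]
  rw [← ZMod.intCast_zmod_eq_zero_iff_dvd, hsum]
  refine ⟨fun hdot => by_contra fun hk0 => hg _ (mem_image_of_mem _ (mem_erase.2 ⟨hk0, hk⟩)) hdot,
    fun hk0 => by simp [hk0, reduce]⟩

theorem abs_le_prod_max_abs_one {ι : Type*} [Fintype ι] (k : ι → ℤ) (j : ι) :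
    |k j| ≤ ∏ i, max |k i| 1 := by
  classical
  rw [← mul_prod_erase _ _ (mem_univ j)]
  exact (le_max_left _ _).trans
    (le_mul_of_one_le_right (by positivity) (one_le_prod fun i _ => le_max_right _ _))

theorem mem_hyperCross {d N : ℕ} {k : Fin d → ℤ} :
    k ∈ hyperCross d N ↔ ∏ j, max |k j| 1 ≤ N := by
  simp only [hyperCross, mem_filter, Fintype.mem_piFinset, mem_Icc, and_iff_right_iff_imp]
  exact fun hk j => abs_le.1 ((abs_le_prod_max_abs_one k j).trans hk)

theorem init_mem_hyperCross {d N : ℕ} {k : Fin (d + 1) → ℤ} (hk : k ∈ hyperCross (d + 1) N) :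
    Fin.init k ∈ hyperCross d (N / max (k (Fin.last d)).natAbs 1) := by
  rw [mem_hyperCross, Fin.prod_univ_castSucc] at hk
  rw [mem_hyperCross, Int.natCast_div, Nat.cast_max, Int.natCast_natAbs, Nat.cast_one,
    Int.le_ediv_iff_mul_le (by positivity)]
  exact hk

theorem card_hyperCross_succ_le_sum (d N : ℕ) :
    #(hyperCross (d + 1) N) ≤ ∑ u ∈ range (N + 1), 2 * #(hyperCross d (N / max u 1)) := by
  classical
  have hsub : hyperCross (d + 1) N ⊆ (range (N + 1)).biUnion fun u =>
      ({(u : ℤ), -(u : ℤ)} : Finset ℤ).biUnion fun t =>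
        (hyperCross d (N / max u 1)).image fun k => Fin.snoc k t := by
    intro k hk
    simp only [mem_biUnion, mem_range, mem_insert, mem_singleton, mem_image]
    refine ⟨(k (Fin.last d)).natAbs, ?_, k (Fin.last d), Int.natAbs_eq _, Fin.init k,
      init_mem_hyperCross hk, Fin.snoc_init_self k⟩
    have := (abs_le_prod_max_abs_one k (Fin.last d)).trans (mem_hyperCross.1 hk)
    rw [Int.abs_eq_natAbs] at this
    omega
  refine (card_le_card hsub).trans (card_biUnion_le.trans (sum_le_sum fun u _ => ?_))
  refine card_biUnion_le.trans ((sum_le_sum fun t _ => card_image_le).trans ?_)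
  rw [sum_const, smul_eq_mul]
  exact Nat.mul_le_mul_right _ card_le_two

theorem sum_range_div_max_one_le (N : ℕ) :
    ∑ u ∈ range (N + 1), ((N / max u 1 : ℕ) : ℝ) ≤ 2 * N * (1 + log N) := by
  have hH : ∑ u ∈ range N, (N : ℝ) / (u + 1) = N * (harmonic N : ℝ) := by
    simp [harmonic, mul_sum, div_eq_mul_inv]
  have hlog : 0 ≤ log N := log_natCast_nonneg N
  calc ∑ u ∈ range (N + 1), ((N / max u 1 : ℕ) : ℝ)
      ≤ ∑ u ∈ range (N + 1), (N : ℝ) / max u 1 := by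
        gcongr with u
        exact_mod_cast Nat.cast_div_le
    _ = N + N * (harmonic N : ℝ) := by
        rw [sum_range_succ', ← hH]
        simp [add_comm]
    _ ≤ N + N * (1 + log N) := by gcongr; exact harmonic_le_one_add_log N
    _ ≤ 2 * N * (1 + log N) := by nlinarith [(N.cast_nonneg : (0 : ℝ) ≤ N)]

theorem card_hyperCross_succ_le (d : ℕ) {N : ℕ} (hN : 1 ≤ N) :
    (#(hyperCross (d + 1) N) : ℝ) ≤ 4 ^ (d + 1) * N * (1 + log N) ^ d := by
  induction d generalizing N with
  | zero =>
    have hbox : #(hyperCross 1 N) ≤ 2 * N + 1 :=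
      (card_filter_le _ _).trans (by
        simp only [Fintype.card_piFinset, Int.card_Icc, prod_const, card_univ, Fintype.card_fin,
          pow_one]
        omega)
    have : (1 : ℝ) ≤ N := mod_cast hN
    have : (#(hyperCross 1 N) : ℝ) ≤ 2 * N + 1 := mod_cast hbox
    simp only [zero_add, pow_one, pow_zero, mul_one]
    linarith
  | succ d ih =>
    have hterm : ∀ u ∈ range (N + 1), (#(hyperCross (d + 1) (N / max u 1)) : ℝ) ≤
        4 ^ (d + 1) * ((N / max u 1 : ℕ) : ℝ) * (1 + log N) ^ d := by
      intro u hu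
      have hM : 1 ≤ N / max u 1 :=
        (Nat.one_le_div_iff (by positivity)).2 (max_le (Nat.lt_succ_iff.1 (mem_range.1 hu)) hN)
      refine (ih hM).trans ?_
      gcongr
      exact_mod_cast Nat.div_le_self _ _
    calc (#(hyperCross (d + 2) N) : ℝ)
        ≤ ∑ u ∈ range (N + 1), 2 * (#(hyperCross (d + 1) (N / max u 1)) : ℝ) :=
          mod_cast card_hyperCross_succ_le_sum (d + 1) N
      _ ≤ ∑ u ∈ range (N + 1), 2 * (4 ^ (d + 1) * ((N / max u 1 : ℕ) : ℝ) * (1 + log N) ^ d) :=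
          sum_le_sum fun u hu => by gcongr; exact hterm u hu
      _ = 2 * 4 ^ (d + 1) * (1 + log N) ^ d * ∑ u ∈ range (N + 1), ((N / max u 1 : ℕ) : ℝ) := by
          rw [mul_sum]
          exact sum_congr rfl fun u _ => by ring
      _ ≤ 2 * 4 ^ (d + 1) * (1 + log N) ^ d * (2 * N * (1 + log N)) := by
          have : 0 ≤ log N := log_natCast_nonneg N
          gcongr
          exact sum_range_div_max_one_le N
      _ = 4 ^ (d + 2) * N * (1 + log N) ^ (d + 1) := by ring

theorem lt_card_hyperCross_succ (d : ℕ) {N : ℕ} (hN : 1 ≤ N) : N < #(hyperCross (d + 1) N) := by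
  have hsub : (range (N + 1)).image (fun u : ℕ => (Fin.cons (u : ℤ) 0 : Fin (d + 1) → ℤ)) ⊆
      hyperCross (d + 1) N := by
    intro k hk
    obtain ⟨u, hu, rfl⟩ := mem_image.1 hk
    rw [mem_range] at hu
    rw [mem_hyperCross, Fin.prod_univ_succ]
    simp only [Fin.cons_zero, Fin.cons_succ, Pi.zero_apply, abs_zero, Nat.abs_cast,
      sup_of_le_right zero_le_one, prod_const_one, mul_one, sup_le_iff, Nat.cast_le,
      Nat.one_le_cast]
    exact ⟨Nat.lt_succ_iff.1 hu, hN⟩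
  have hinj : Function.Injective (fun u : ℕ => (Fin.cons (u : ℤ) 0 : Fin (d + 1) → ℤ)) :=
    fun u v huv => by simpa using congrFun huv 0
  have := card_le_card hsub
  rw [card_image_of_injective _ hinj, card_range] at this
  omega

theorem one_add_log_le_three_mul_log {x : ℝ} (hx : 2 ≤ x) : 1 + log x ≤ 3 * log x := by
  have := log_two_gt_d9
  have := log_le_log (by norm_num) hx
  linarith

/-- for every `N` there is a Korobov cubature formula with
`m ≤ C(d)·N·(log N)^{d-1}` nodes that is exact on `𝒯(Γ(N,d))` (Remark CR1). -/
theorem stmt18 (d : ℕ) (hd : 0 < d) :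
    ∃ C : ℝ, 0 < C ∧ ∀ N : ℕ, 1 ≤ N →
      ∃ (m : ℕ) (h : Fin d → ℤ), 0 < m ∧
        (N = 1 → (m : ℝ) ≤ C) ∧
        (1 < N → (m : ℝ) ≤ C * N * Real.log N ^ (d - 1)) ∧
        ∀ f ∈ trigSpace (hyperCross d N),
          (m : ℂ)⁻¹ * ∑ ν ∈ Finset.Icc 1 m, f (korNode m h ν) =
            (((2 * Real.pi) ^ d : ℝ) : ℂ)⁻¹ * ∫ x in cube d, f x := by
  obtain ⟨d, rfl⟩ : ∃ e, d = e + 1 := ⟨d - 1, by omega⟩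
  refine ⟨2 * 4 ^ (d + 1) * 3 ^ d, by positivity, fun N hN => ?_⟩
  have hΓ := lt_card_hyperCross_succ d hN
  obtain ⟨p, hp, hΓp, hp2⟩ :=
    Nat.exists_prime_lt_and_le_two_mul #(hyperCross (d + 1) N) (by omega)
  obtain ⟨h, hh⟩ := exists_forall_dvd_sum_mul_iff_eq_zero hp (fun k hk j =>
    ((abs_le_prod_max_abs_one k j).trans (mem_hyperCross.1 hk)).trans_lt (by omega)) hΓp
  have hpN : (p : ℝ) ≤ 2 * 4 ^ (d + 1) * N * (1 + log N) ^ d := by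
    have := card_hyperCross_succ_le d hN
    have : (p : ℝ) ≤ 2 * #(hyperCross (d + 1) N) := mod_cast hp2
    linarith
  refine ⟨p, h, hp.pos, fun hN1 => ?_, fun hN2 => ?_,
    fun f hf => korobov_exact_of_forall_expFun
      (fun k hk => korobov_exact_expFun hp.ne_zero (hh k hk)) hf⟩
  · subst hN1
    simp only [Nat.cast_one, log_one, add_zero, one_pow, mul_one] at hpN
    exact hpN.trans (le_mul_of_one_le_right (by positivity) (one_le_pow₀ (by norm_num)))
  · calc (p : ℝ) ≤ 2 * 4 ^ (d + 1) * N * (1 + log N) ^ d := hpN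
      _ ≤ 2 * 4 ^ (d + 1) * N * (3 * log N) ^ d := by
        gcongr
        exact one_add_log_le_three_mul_log (mod_cast hN2)
      _ = 2 * 4 ^ (d + 1) * 3 ^ d * N * log N ^ (d + 1 - 1) := by
        rw [mul_pow, Nat.add_sub_cancel]; ring
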